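/- arXiv:math/0006029 — 9 statements merged into one kernel-verified Lean document; each statement's English description precedes it below -/
import Mathlib

section
/- Let r ≥ 2 and s ≥ 1 be integers, let φ : ℂ^r → ℂ^s be a nonzero linear map, let (w_1,…,w_r) be a basis of ℂ^r, and fix 1 ≤ i ≤ r−1. Then −min{ γ^{(i)}_j : j ∈ {1,…,r}, φ(w_j) ≠ 0 } equals −i if the span of w_1,…,w_i is contained in the kernel of φ, and equals r−i otherwise. -/
section TwoValuedInf

variable {ι α : Type*} [ConditionallyCompleteLinearOrder α] {T : Set ι} {p : ι → Prop}
  [DecidablePred p] {a b : α}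

theorem csInf_image_ite_of_exists (hab : a ≤ b) (h : ∃ j ∈ T, p j) :
    sInf ((fun j => if p j then a else b) '' T) = a := by
  obtain ⟨j, hjT, hj⟩ := h
  refine IsLeast.csInf_eq ⟨⟨j, hjT, if_pos hj⟩, ?_⟩
  rintro _ ⟨k, -, rfl⟩
  by_cases hk : p k <;> simp [hk, hab]

theorem csInf_image_ite_of_forall_not (hT : T.Nonempty) (h : ∀ j ∈ T, ¬ p j) :
    sInf ((fun j => if p j then a else b) '' T) = b := by
  rw [Set.image_congr fun j hj => if_neg (h j hj), hT.image_const, csInf_singleton]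

end TwoValuedInf

theorem Submodule.span_image_le_ker_iff {R M N ι : Type*} [Semiring R] [AddCommMonoid M]
    [AddCommMonoid N] [Module R M] [Module R N] {φ : M →ₗ[R] N} {v : ι → M} {S : Set ι} :
    span R (v '' S) ≤ LinearMap.ker φ ↔ ∀ j ∈ S, φ (v j) = 0 := by
  simp [span_le, Set.subset_def]

theorem Module.Basis.exists_apply_ne_zero_of_ne_zero {R M N ι : Type*} [Semiring R]
    [AddCommMonoid M] [AddCommMonoid N] [Module R M] [Module R N] (w : Basis ι R M)
    {φ : M →ₗ[R] N} (hφ : φ ≠ 0) : ∃ j, φ (w j) ≠ 0 := by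
  by_contra! h
  exact hφ (w.ext fun j => by simpa using h j)

/-- Indices are 0-based: `γ^{(i)}_j = i − r` for `j < i` and `= i` otherwise. -/
theorem framed_module_weight_general (r s : ℕ)
    (φ : (Fin r → ℂ) →ₗ[ℂ] (Fin s → ℂ)) (hφ : φ ≠ 0)
    (w : Module.Basis (Fin r) ℂ (Fin r → ℂ))
    (i : ℕ) :
    (Submodule.span ℂ (⇑w '' {j : Fin r | (j : ℕ) < i}) ≤ LinearMap.ker φ →
      -sInf {m : ℤ | ∃ j : Fin r, φ (w j) ≠ 0 ∧
        (if (j : ℕ) < i then (i : ℤ) - r else (i : ℤ)) = m} = -(i : ℤ)) ∧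
    (¬ Submodule.span ℂ (⇑w '' {j : Fin r | (j : ℕ) < i}) ≤ LinearMap.ker φ →
      -sInf {m : ℤ | ∃ j : Fin r, φ (w j) ≠ 0 ∧
        (if (j : ℕ) < i then (i : ℤ) - r else (i : ℤ)) = m} = (r : ℤ) - i) := by
  rw [Submodule.span_image_le_ker_iff]
  -- `{m | ∃ j, P j ∧ f j = m}` is `f '' {j | P j}` by definition of `Set.image`.
  constructor
  · intro hker
    obtain ⟨j, hj⟩ := w.exists_apply_ne_zero_of_ne_zero hφ
    exact congrArg Neg.neg <| csInf_image_ite_of_forall_not ⟨j, hj⟩ fun k hk hki => hk (hker k hki)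
  · intro hker
    obtain ⟨j, hji, hj⟩ := not_forall₂.mp hker
    have hmin : (i : ℤ) - r ≤ i := sub_le_self _ r.cast_nonneg
    refine (congrArg Neg.neg ?_).trans (neg_sub _ _)
    exact csInf_image_ite_of_exists (T := {j | φ (w j) ≠ 0}) hmin ⟨j, hj, hji⟩

/-- Hilbert–Mumford weight for framed modules: for a nonzero linear map
`φ : ℂ^r → ℂ^s`, a basis `(w_1,…,w_r)` of `ℂ^r`, and `1 ≤ i ≤ r−1`, the weight
`−min{ γ^{(i)}_j : φ(w_j) ≠ 0 }` (0-based indexing: `γ^{(i)}_j = i − r` for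
`j < i` and `= i` otherwise) equals `−i` if `span(w_1,…,w_i) ⊆ ker φ` and
`r − i` otherwise. -/
theorem framed_module_weight (r s : ℕ) (hr : 2 ≤ r) (hs : 1 ≤ s)
    (φ : (Fin r → ℂ) →ₗ[ℂ] (Fin s → ℂ)) (hφ : φ ≠ 0)
    (w : Module.Basis (Fin r) ℂ (Fin r → ℂ))
    (i : ℕ) (hi1 : 1 ≤ i) (hi2 : i ≤ r - 1) :
    (Submodule.span ℂ (⇑w '' {j : Fin r | (j : ℕ) < i}) ≤ LinearMap.ker φ →
      -sInf {m : ℤ | ∃ j : Fin r, φ (w j) ≠ 0 ∧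
        (if (j : ℕ) < i then (i : ℤ) - r else (i : ℤ)) = m} = -(i : ℤ)) ∧
    (¬ Submodule.span ℂ (⇑w '' {j : Fin r | (j : ℕ) < i}) ≤ LinearMap.ker φ →
      -sInf {m : ℤ | ∃ j : Fin r, φ (w j) ≠ 0 ∧
        (if (j : ℕ) < i then (i : ℤ) - r else (i : ℤ)) = m} = (r : ℤ) - i) :=
  framed_module_weight_general r s φ hφ w i
end

section
/- Let r ≥ 2 be an integer, let (f, ε) ∈ End(ℂ^r) × ℂ be nonzero, let (w_1,…,w_r) be a basis of ℂ^r with f(w_k) = Σ_j f_{jk} w_j, fix 1 ≤ i ≤ r−1, and let W_i denote the span of w_1,…,w_i. Define μ := −min M, where M := { γ^{(i)}_k − γ^{(i)}_j : j,k ∈ {1,…,r}, f_{jk} ≠ 0 } ∪ { 0 : if ε ≠ 0 }. Then: (i) μ = r if f(W_i) is not contained in W_i; (ii) μ = −r if W_i ⊆ ker f, the image of f is contained in W_i, and ε = 0; (iii) μ = 0 in all other cases. -/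
/-!
Write `f_{jk}` for the matrix of `f` in the basis `w` and `s = {1, …, i}`. The difference
`γ_k − γ_j` is `−r` if `k ∈ s ∌ j`, `r` if `j ∈ s ∌ k`, and `0` otherwise. Non-invariance of
`W_i` means some `f_{jk} ≠ 0` has `k ∈ s ∌ j`, and superinvariance means every `f_{jk} ≠ 0` has
`j ∈ s ∌ k`. In the remaining case invariance keeps `−r` out of `M`, while an entry with `j, k`
on the same side of `s`, or `ε ≠ 0`, puts `0` into it.
-/

open Submodule

namespace Module.Basis

variable {R M ι : Type*} [Semiring R] [AddCommMonoid M] [Module R M] (b : Basis ι R M)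
  (p : ι → Prop) (f : M →ₗ[R] M)

theorem mem_span_image_setOf_iff {x : M} :
    x ∈ span R (b '' {j | p j}) ↔ ∀ j, b.repr x j ≠ 0 → p j := by
  rw [b.mem_span_image]
  exact ⟨fun h j hj => h (Finsupp.mem_support_iff.2 hj),
    fun h j hj => h j (Finsupp.mem_support_iff.1 hj)⟩

theorem map_span_image_le_iff :
    (span R (b '' {j | p j})).map f ≤ span R (b '' {j | p j}) ↔
      ∀ j k, b.repr (f (b k)) j ≠ 0 → p k → p j := by
  simp only [map_span_le, Set.forall_mem_image, Set.mem_ofPred_eq, mem_span_image_setOf_iff]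
  exact ⟨fun h j k hA hk => h hk j hA, fun h k hk j hA => h j k hA hk⟩

theorem span_image_le_ker_iff :
    span R (b '' {j | p j}) ≤ LinearMap.ker f ↔ ∀ j k, b.repr (f (b k)) j ≠ 0 → ¬ p k := by
  rw [span_le, Set.image_subset_iff]
  simp only [Set.subset_def, Set.mem_preimage, SetLike.mem_coe, LinearMap.mem_ker,
    ← b.forall_coord_eq_zero_iff, coord_apply, Set.mem_ofPred_eq]
  exact ⟨fun h j k hA hk => hA (h k hk j), fun h k hk j => by_contra fun hA => h j k hA hk⟩

theorem range_le_span_image_iff :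
    LinearMap.range f ≤ span R (b '' {j | p j}) ↔ ∀ j k, b.repr (f (b k)) j ≠ 0 → p j := by
  rw [LinearMap.range_eq_map, ← b.span_eq, map_span_le]
  simp only [Set.forall_mem_range, mem_span_image_setOf_iff]
  exact forall_comm

theorem span_image_le_ker_and_range_le_iff :
    span R (b '' {j | p j}) ≤ LinearMap.ker f ∧ LinearMap.range f ≤ span R (b '' {j | p j}) ↔
      ∀ j k, b.repr (f (b k)) j ≠ 0 → ¬ p k ∧ p j := by
  simp only [span_image_le_ker_iff, range_le_span_image_iff, imp_and, forall_and]

theorem linearMap_eq_zero_iff : f = 0 ↔ ∀ j k, b.repr (f (b k)) j = 0 := by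
  refine ⟨fun h j k => by simp [h], fun h => b.ext fun k => ?_⟩
  simpa using b.forall_coord_eq_zero_iff.1 (h · k)

end Module.Basis

def weightSet {ι : Type*} (A : ι → ι → Prop) (γ : ι → ℤ) (c : Prop) : Set ℤ :=
  {m | ∃ j k, A j k ∧ γ k - γ j = m} ∪ {m | c ∧ m = 0}

section TwoLevel

variable {ι : Type*} (A : ι → ι → Prop) (p : ι → Prop) [DecidablePred p] {a b : ℤ} {c : Prop}

theorem isLeast_weightSet_of_exists (hab : a ≤ b) (h : ∃ j k, A j k ∧ p k ∧ ¬ p j) :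
    IsLeast (weightSet A (fun k => if p k then a else b) c) (a - b) := by
  obtain ⟨j, k, hA, hk, hj⟩ := h
  refine ⟨Or.inl ⟨j, k, hA, by simp [hk, hj]⟩, ?_⟩
  rintro m (⟨j', k', -, rfl⟩ | ⟨-, rfl⟩)
  · dsimp only
    split_ifs <;> omega
  · omega

theorem isLeast_weightSet_of_forall (hne : ∃ j k, A j k) (h : ∀ j k, A j k → ¬ p k ∧ p j)
    (hc : ¬ c) : IsLeast (weightSet A (fun k => if p k then a else b) c) (b - a) := by
  obtain ⟨j, k, hA⟩ := hne
  refine ⟨Or.inl ⟨j, k, hA, by simp [h j k hA]⟩, ?_⟩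
  rintro m (⟨j, k, hA, rfl⟩ | ⟨hc', -⟩)
  · simp [h j k hA]
  · exact absurd hc' hc

theorem isLeast_weightSet_zero (hab : a ≤ b) (hinv : ∀ j k, A j k → p k → p j)
    (hnot : ¬ ((∀ j k, A j k → ¬ p k ∧ p j) ∧ ¬ c)) :
    IsLeast (weightSet A (fun k => if p k then a else b) c) 0 := by
  refine ⟨?_, ?_⟩
  · by_cases hc : c
    · exact Or.inr ⟨hc, rfl⟩
    obtain ⟨j, k, hA, hjk⟩ : ∃ j k, A j k ∧ (¬ p k → ¬ p j) := by
      by_contra! h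
      exact hnot ⟨h, hc⟩
    have hkj : p k ↔ p j := ⟨hinv j k hA, not_imp_not.1 hjk⟩
    exact Or.inl ⟨j, k, hA, by by_cases hk : p k <;> simp [hk, ← hkj]⟩
  · rintro m (⟨j, k, hA, rfl⟩ | ⟨-, rfl⟩)
    · dsimp only
      split_ifs with hk hj
      all_goals first | omega | exact absurd (hinv j k hA hk) hj
    · exact le_rfl

end TwoLevel

theorem hitchin_pair_weight_general (r : ℕ)
    (f : (Fin r → ℂ) →ₗ[ℂ] (Fin r → ℂ)) (ε : ℂ) (hfε : ¬ (f = 0 ∧ ε = 0))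
    (w : Module.Basis (Fin r) ℂ (Fin r → ℂ))
    (i : ℕ) :
    let γ : Fin r → ℤ := fun k => if (k : ℕ) < i then (i : ℤ) - r else (i : ℤ)
    let M : Set ℤ :=
      {m | ∃ j k : Fin r, w.repr (f (w k)) j ≠ 0 ∧ γ k - γ j = m} ∪ {m | ε ≠ 0 ∧ m = 0}
    let W : Submodule ℂ (Fin r → ℂ) := Submodule.span ℂ (⇑w '' {j : Fin r | (j : ℕ) < i})
    let μ : ℤ := -sInf M
    (¬ Submodule.map f W ≤ W → μ = (r : ℤ)) ∧
    ((W ≤ LinearMap.ker f ∧ LinearMap.range f ≤ W ∧ ε = 0) → μ = -(r : ℤ)) ∧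
    (Submodule.map f W ≤ W →
      ¬ (W ≤ LinearMap.ker f ∧ LinearMap.range f ≤ W ∧ ε = 0) → μ = 0) := by
  intro γ M W μ
  have hμ : ∀ m, IsLeast (weightSet (fun j k => w.repr (f (w k)) j ≠ 0) γ (ε ≠ 0)) m → μ = -m :=
    fun m h => congrArg Neg.neg h.csInf_eq
  have hinv_iff := w.map_span_image_le_iff (fun j : Fin r => (j : ℕ) < i) f
  have hsuper_iff := w.span_image_le_ker_and_range_le_iff (fun j : Fin r => (j : ℕ) < i) f
  refine ⟨fun hni => ?_, fun ⟨hker, hrange, hε⟩ => ?_, fun hinv hnot => ?_⟩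
  · have hout : ∃ j k : Fin r, w.repr (f (w k)) j ≠ 0 ∧ (k : ℕ) < i ∧ ¬ (j : ℕ) < i := by
      simpa using hinv_iff.not.mp hni
    rw [hμ _ (isLeast_weightSet_of_exists _ _ (by omega) hout)]
    ring
  · have hne : ∃ j k, w.repr (f (w k)) j ≠ 0 := by
      simpa using (w.linearMap_eq_zero_iff f).not.mp fun h => hfε ⟨h, hε⟩
    rw [hμ _ (isLeast_weightSet_of_forall _ _ hne (hsuper_iff.mp ⟨hker, hrange⟩) (not_not.2 hε))]
    ring
  · rw [← and_assoc, ← not_ne_iff, hsuper_iff] at hnot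
    exact hμ _ (isLeast_weightSet_zero _ _ (by omega) (hinv_iff.mp hinv) hnot)

/-- Hilbert–Mumford weight for Hitchin pairs: for a nonzero pair `(f, ε)` with
`f ∈ End(ℂ^r)` and `ε ∈ ℂ`, a basis `(w_1,…,w_r)` with matrix entries
`f_{jk} = (w.repr (f(w_k)))_j`, and `1 ≤ i ≤ r−1`, set
`μ = −min({ γ^{(i)}_k − γ^{(i)}_j : f_{jk} ≠ 0 } ∪ { 0 if ε ≠ 0 })`
(0-based indexing of `γ^{(i)}`). Then `μ = r` if `W_i = span(w_1,…,w_i)` is not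
`f`-invariant; `μ = −r` if `W_i` is `f`-superinvariant (`W_i ⊆ ker f` and
`im f ⊆ W_i`) and `ε = 0`; and `μ = 0` in all other cases. -/
theorem hitchin_pair_weight (r : ℕ) (hr : 2 ≤ r)
    (f : (Fin r → ℂ) →ₗ[ℂ] (Fin r → ℂ)) (ε : ℂ) (hfε : ¬ (f = 0 ∧ ε = 0))
    (w : Module.Basis (Fin r) ℂ (Fin r → ℂ))
    (i : ℕ) (hi1 : 1 ≤ i) (hi2 : i ≤ r - 1) :
    let γ : Fin r → ℤ := fun k => if (k : ℕ) < i then (i : ℤ) - r else (i : ℤ)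
    let M : Set ℤ :=
      {m | ∃ j k : Fin r, w.repr (f (w k)) j ≠ 0 ∧ γ k - γ j = m} ∪ {m | ε ≠ 0 ∧ m = 0}
    let W : Submodule ℂ (Fin r → ℂ) := Submodule.span ℂ (⇑w '' {j : Fin r | (j : ℕ) < i})
    let μ : ℤ := -sInf M
    (¬ Submodule.map f W ≤ W → μ = (r : ℤ)) ∧
    ((W ≤ LinearMap.ker f ∧ LinearMap.range f ≤ W ∧ ε = 0) → μ = -(r : ℤ)) ∧
    (Submodule.map f W ≤ W →
      ¬ (W ≤ LinearMap.ker f ∧ LinearMap.range f ≤ W ∧ ε = 0) → μ = 0) :=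
  hitchin_pair_weight_general r f ε hfε w i
end

section
/- Let 0 < s < r be integers, let v : ℂ^r → ℂ^s be a surjective linear map, let (w_1,…,w_r) be a basis of ℂ^r, fix 1 ≤ i ≤ r−1, and let W_i denote the span of w_1,…,w_i. Then the set of s-element subsets J ⊆ {1,…,r} such that the family (v(w_j))_{j∈J} is linearly independent is nonempty, and −min{ Σ_{j∈J} γ^{(i)}_j : J ⊆ {1,…,r}, #J = s, (v(w_j))_{j∈J} linearly independent } = i·dim(ker v) − r·dim(W_i ∩ ker v). -/
/-!
Write `f j = v (w j)` and `S = {j | j < i}`. The weight of `J` is `i·#J − r·#(J ∩ S)`, so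
minimising it over independent `s`-sets means maximising `#(J ∩ S)`. For independent `J` this
is at most `d = dim span f(S) = dim v(W_i)`, and the bound is attained by extending a basis of
`span f(S)` taken from `f(S)` to a basis of `ℂ^s` taken from all the `f j`. Rank–nullity for
`v` and for `v` restricted to `W_i` turns `r·d − i·s` into the stated formula.
-/

open Module Submodule

theorem Finset.sum_ite_sub_eq_mul_card_sub {ι R : Type*} [CommRing R] (J : Finset ι)
    (p : ι → Prop) [DecidablePred p] (a c : R) :
    ∑ j ∈ J, (if p j then a - c else a) = a * J.card - c * (J.filter p).card := by
  rw [Finset.sum_ite, Finset.sum_const, Finset.sum_const, nsmul_eq_mul, nsmul_eq_mul,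
    ← J.card_filter_add_card_filter_not p]
  push_cast
  ring

section LinearIndepOn

variable {K V ι : Type*} [DivisionRing K] [AddCommGroup V] [Module K V] {f : ι → V}

theorem LinearIndepOn.finrank_span_image_finset {J : Finset ι} (hJ : LinearIndepOn K f J) :
    finrank K (span K (f '' J)) = J.card := by
  rw [Set.image_eq_range, finrank_span_eq_card hJ]
  simp only [SetLike.coe_sort_coe, Fintype.card_coe]

theorem LinearIndepOn.card_filter_le_finrank_span [FiniteDimensional K V] {J : Finset ι}
    (hJ : LinearIndepOn K f J) (p : ι → Prop) [DecidablePred p] :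
    (J.filter p).card ≤ finrank K (span K (f '' {j | p j})) := by
  rw [← (hJ.mono (Finset.coe_subset.2 (Finset.filter_subset p J))).finrank_span_image_finset]
  exact finrank_mono (span_mono (Set.image_mono fun j hj => (Finset.mem_filter.1 hj).2))

theorem exists_linearIndepOn_span_eq_finrank_le_card_filter [Finite ι] (p : ι → Prop)
    [DecidablePred p] : ∃ J : Finset ι, LinearIndepOn K f J ∧
      span K (f '' J) = span K (Set.range f) ∧
      finrank K (span K (f '' {j | p j})) ≤ (J.filter p).card := by
  obtain ⟨B, hBp, -, hpB, hB⟩ :=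
    exists_linearIndepOn_extension (linearIndepOn_empty K f) (Set.empty_subset {j | p j})
  obtain ⟨J, -, hBJ, hJ_span, hJ⟩ := exists_linearIndepOn_extension hB (Set.subset_univ B)
  obtain ⟨J, rfl⟩ := J.toFinite.exists_finset_coe
  refine ⟨J, hJ, ?_, ?_⟩
  · refine le_antisymm (span_mono (Set.image_subset_range _ _)) ?_
    rwa [← Set.image_univ, span_le]
  · have hp_span : f '' {j | p j} ⊆ span K (f '' (J.filter p)) := by
      refine hpB.trans (span_le.2 ((Set.image_mono fun j hj => ?_).trans subset_span))
      simpa using And.intro (hBJ hj) (hBp hj)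
    have : FiniteDimensional K (span K (f '' (J.filter p))) :=
      FiniteDimensional.span_of_finite K (Set.toFinite _)
    calc finrank K (span K (f '' {j | p j}))
        ≤ finrank K (span K (f '' (J.filter p))) := finrank_mono (span_le.2 hp_span)
      _ = (J.filter p).card :=
        (hJ.mono (Finset.coe_subset.2 (Finset.filter_subset p J))).finrank_span_image_finset

theorem isLeast_sum_ite_of_linearIndepOn [Fintype ι] [FiniteDimensional K V]
    (hf : span K (Set.range f) = ⊤) (p : ι → Prop) [DecidablePred p] {a c : ℤ}
    (hc : 0 ≤ c) :
    IsLeast {m : ℤ | ∃ J : Finset ι, J.card = finrank K V ∧ LinearIndepOn K f J ∧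
        ∑ j ∈ J, (if p j then a - c else a) = m}
      (a * finrank K V - c * finrank K (span K (f '' {j | p j}))) := by
  simp only [Finset.sum_ite_sub_eq_mul_card_sub]
  refine ⟨?_, ?_⟩
  · obtain ⟨J, hJ, hJ_span, hJ_card⟩ :=
      exists_linearIndepOn_span_eq_finrank_le_card_filter (K := K) (f := f) p
    have hJ_card_eq : J.card = finrank K V := by
      rw [← hJ.finrank_span_image_finset, hJ_span, hf, finrank_top]
    refine ⟨J, hJ_card_eq, hJ, ?_⟩
    rw [hJ_card_eq, le_antisymm (hJ.card_filter_le_finrank_span p) hJ_card]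
  · rintro m ⟨J, hJ_card, hJ, rfl⟩
    rw [hJ_card]
    gcongr
    exact_mod_cast hJ.card_filter_le_finrank_span p

end LinearIndepOn

theorem Submodule.finrank_map_add_finrank_inf_ker {K V V' : Type*} [DivisionRing K]
    [AddCommGroup V] [Module K V] [AddCommGroup V'] [Module K V'] (W : Submodule K V)
    [FiniteDimensional K W] (v : V →ₗ[K] V') :
    finrank K (W.map v) + finrank K ↥(W ⊓ LinearMap.ker v) = finrank K W := by
  rw [← (v.domRestrict W).finrank_range_add_finrank_ker, LinearMap.range_domRestrict,
    LinearMap.ker_domRestrict, ← (comapSubtypeEquivOfLe inf_le_left).finrank_eq,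
    comap_inf, comap_subtype_self, top_inf_eq]

theorem LinearIndependent.finrank_span_image_fin_lt {K V : Type*} [DivisionRing K]
    [AddCommGroup V] [Module K V] {r i : ℕ} {w : Fin r → V} (hw : LinearIndependent K w)
    (hi : i ≤ r) : finrank K (span K (w '' {j : Fin r | (j : ℕ) < i})) = i := by
  rw [← Fin.range_castLE hi, ← Set.range_comp,
    finrank_span_eq_card (hw.comp _ (Fin.castLE_injective hi)), Fintype.card_fin]

theorem extension_pair_weight_general (r s : ℕ)
    (v : (Fin r → ℂ) →ₗ[ℂ] (Fin s → ℂ)) (hv : Function.Surjective v)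
    (w : Module.Basis (Fin r) ℂ (Fin r → ℂ))
    (i : ℕ) (hi2 : i ≤ r - 1) :
    let γ : Fin r → ℤ := fun k => if (k : ℕ) < i then (i : ℤ) - r else (i : ℤ)
    let W : Submodule ℂ (Fin r → ℂ) := Submodule.span ℂ (⇑w '' {j : Fin r | (j : ℕ) < i})
    (∃ J : Finset (Fin r), J.card = s ∧
        LinearIndependent ℂ (fun j : {x : Fin r // x ∈ J} => v (w j.1))) ∧
    -sInf {m : ℤ | ∃ J : Finset (Fin r), J.card = s ∧
        LinearIndependent ℂ (fun j : {x : Fin r // x ∈ J} => v (w j.1)) ∧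
        ∑ j ∈ J, γ j = m} =
      (i : ℤ) * (Module.finrank ℂ (LinearMap.ker v) : ℤ) -
        (r : ℤ) * (Module.finrank ℂ ↥(W ⊓ LinearMap.ker v) : ℤ) := by
  intro γ W
  have h_span : span ℂ (Set.range (v ∘ w)) = ⊤ := by
    rw [Set.range_comp, ← map_span, w.span_eq, Submodule.map_top, LinearMap.range_eq_top.2 hv]
  have h_least := isLeast_sum_ite_of_linearIndepOn h_span (fun j : Fin r => (j : ℕ) < i)
    (a := i) (c := r) (Int.natCast_nonneg r)
  rw [finrank_fin_fun, Set.image_comp, ← map_span] at h_least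
  have h_W := W.finrank_map_add_finrank_inf_ker v
  rw [w.linearIndependent.finrank_span_image_fin_lt (by omega : i ≤ r)] at h_W
  have h_ker := v.finrank_range_add_finrank_ker
  rw [LinearMap.range_eq_top.2 hv, finrank_top, finrank_fin_fun, finrank_fin_fun] at h_ker
  obtain ⟨J, h_card, h_indep, -⟩ := h_least.1
  refine ⟨⟨J, h_card, h_indep⟩, (congrArg (- ·) h_least.csInf_eq).trans ?_⟩
  push_cast [← h_W, ← h_ker]
  ring

/-- Hilbert–Mumford weight for extension pairs (Plücker point of a surjection
`v : ℂ^r → ℂ^s`): for a basis `(w_1,…,w_r)` of `ℂ^r` and `1 ≤ i ≤ r−1`, the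
collection of `s`-element subsets `J` with `(v(w_j))_{j∈J}` linearly independent is
nonempty, and `−min{ ∑_{j∈J} γ^{(i)}_j : J as above }` equals
`i·dim(ker v) − r·dim(W_i ∩ ker v)`, where `W_i = span(w_1,…,w_i)`
(0-based indexing of `γ^{(i)}`). -/
theorem extension_pair_weight (r s : ℕ) (hs : 0 < s) (hsr : s < r)
    (v : (Fin r → ℂ) →ₗ[ℂ] (Fin s → ℂ)) (hv : Function.Surjective v)
    (w : Module.Basis (Fin r) ℂ (Fin r → ℂ))
    (i : ℕ) (hi1 : 1 ≤ i) (hi2 : i ≤ r - 1) :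
    let γ : Fin r → ℤ := fun k => if (k : ℕ) < i then (i : ℤ) - r else (i : ℤ)
    let W : Submodule ℂ (Fin r → ℂ) := Submodule.span ℂ (⇑w '' {j : Fin r | (j : ℕ) < i})
    (∃ J : Finset (Fin r), J.card = s ∧
        LinearIndependent ℂ (fun j : {x : Fin r // x ∈ J} => v (w j.1))) ∧
    -sInf {m : ℤ | ∃ J : Finset (Fin r), J.card = s ∧
        LinearIndependent ℂ (fun j : {x : Fin r // x ∈ J} => v (w j.1)) ∧
        ∑ j ∈ J, γ j = m} =
      (i : ℤ) * (Module.finrank ℂ (LinearMap.ker v) : ℤ) -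
        (r : ℤ) * (Module.finrank ℂ ↥(W ⊓ LinearMap.ker v) : ℤ) :=
  extension_pair_weight_general r s v hv w i hi2
end

section
/- Let r ≥ 2 be an integer, let b : ℂ^r × ℂ^r → ℂ be a nonzero symmetric bilinear form, let (w_1,…,w_r) be a basis of ℂ^r, fix 1 ≤ i ≤ r−1, and let W_i denote the span of w_1,…,w_i. Define μ_i := −min{ γ^{(i)}_j + γ^{(i)}_k : j,k ∈ {1,…,r}, b(w_j,w_k) ≠ 0 }. Then μ_i = 2r − 2i if b restricted to W_i × W_i is nonzero; μ_i = r − 2i if b vanishes on W_i × W_i but b(x,y) ≠ 0 for some x ∈ W_i and y ∈ ℂ^r; and μ_i = −2i if b vanishes on W_i × ℂ^r. In other words, μ_i = c·r − 2i, where c ∈ {0,1,2} is determined by these three cases. -/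
/-!
With `T = {j | j < i}`, `γ` equals `i - r` on `T` and `i` off `T`, so `γ j + γ k` is
`2i - 2r`, `2i - r` or `2i` according as two, one or none of `j, k` lie in `T`, and the
minimum over the support `{(j, k) | b(w_j, w_k) ≠ 0}` is the smallest of these values realised
there. By bilinearity, `b` is nonzero on `span (w '' T) × span (w '' U)` iff the support meets
`T × U`, so the three cases say that the support meets `T × T`; misses `T × T` but meets
`T × univ`; misses `T × univ`, and then by symmetry lies in `Tᶜ × Tᶜ`, nonempty as `b ≠ 0`.
-/

namespace LinearMap

variable {R M N P : Type*} [CommSemiring R] [AddCommMonoid M] [AddCommMonoid N]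
  [AddCommMonoid P] [Module R M] [Module R N] [Module R P]

theorem apply_eq_zero_of_mem_span (B : M →ₗ[R] N →ₗ[R] P) {s : Set M} {t : Set N}
    (h : ∀ u ∈ s, ∀ v ∈ t, B u v = 0) {x : M} (hx : x ∈ Submodule.span R s)
    {y : N} (hy : y ∈ Submodule.span R t) : B x y = 0 := by
  have hs : ∀ u ∈ s, B u y = 0 := fun u hu =>
    (Submodule.span_le.2 fun v hv => mem_ker.2 (h u hu v hv) : _ ≤ ker (B u)) hy
  simpa using (Submodule.span_le.2 fun u hu => mem_ker.2 (hs u hu) : _ ≤ ker (B.flip y)) hx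

theorem exists_apply_ne_zero_of_mem_span (B : M →ₗ[R] N →ₗ[R] P) {s : Set M} {t : Set N}
    {x : M} (hx : x ∈ Submodule.span R s) {y : N} (hy : y ∈ Submodule.span R t)
    (hxy : B x y ≠ 0) : ∃ u ∈ s, ∃ v ∈ t, B u v ≠ 0 := by
  by_contra! h
  exact hxy (B.apply_eq_zero_of_mem_span h hx hy)

end LinearMap

def pairWeights {ι : Type*} (P : ι → ι → Prop) (γ : ι → ℤ) : Set ℤ :=
  {m | ∃ j k, P j k ∧ γ j + γ k = m}

section TwoStepWeight

variable {ι : Type*} {P : ι → ι → Prop} {p : ι → Prop} [DecidablePred p] {a b : ℤ}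

theorem isLeast_pairWeights_of_both (hab : a ≤ b) {j k : ι} (hjk : P j k) (hj : p j)
    (hk : p k) : IsLeast (pairWeights P fun l => if p l then a else b) (a + a) := by
  refine ⟨⟨j, k, hjk, by simp [hj, hk]⟩, ?_⟩
  rintro _ ⟨j', k', -, rfl⟩
  dsimp only
  split_ifs <;> omega

theorem isLeast_pairWeights_of_one (hab : a ≤ b) (hboth : ∀ j k, p j → p k → ¬ P j k)
    {j k : ι} (hjk : P j k) (hj : p j) :
    IsLeast (pairWeights P fun l => if p l then a else b) (a + b) := by
  have hk : ¬ p k := fun hk => hboth j k hj hk hjk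
  refine ⟨⟨j, k, hjk, by simp [hj, hk]⟩, ?_⟩
  rintro _ ⟨j', k', hjk', rfl⟩
  dsimp only
  split_ifs with hj' hk'
  · exact absurd hjk' (hboth j' k' hj' hk')
  all_goals omega

theorem isLeast_pairWeights_of_none (hnone : ∀ j k, P j k → ¬ p j ∧ ¬ p k) {j k : ι}
    (hjk : P j k) : IsLeast (pairWeights P fun l => if p l then a else b) (b + b) := by
  refine ⟨⟨j, k, hjk, by simp [hnone j k hjk]⟩, ?_⟩
  rintro _ ⟨j', k', hjk', rfl⟩
  simp [hnone j' k' hjk']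

end TwoStepWeight

theorem conic_bundle_weight_general (r : ℕ)
    (B : (Fin r → ℂ) →ₗ[ℂ] (Fin r → ℂ) →ₗ[ℂ] ℂ)
    (hBsymm : ∀ x y : Fin r → ℂ, B x y = B y x) (hB : B ≠ 0)
    (w : Module.Basis (Fin r) ℂ (Fin r → ℂ))
    (i : ℕ) :
    let γ : Fin r → ℤ := fun k => if (k : ℕ) < i then (i : ℤ) - r else (i : ℤ)
    let W : Submodule ℂ (Fin r → ℂ) := Submodule.span ℂ (⇑w '' {j : Fin r | (j : ℕ) < i})
    let μ : ℤ := -sInf {m : ℤ | ∃ j k : Fin r, B (w j) (w k) ≠ 0 ∧ γ j + γ k = m}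
    ((∃ x ∈ W, ∃ y ∈ W, B x y ≠ 0) → μ = 2 * (r : ℤ) - 2 * i) ∧
    ((∀ x ∈ W, ∀ y ∈ W, B x y = 0) → (∃ x ∈ W, ∃ y : Fin r → ℂ, B x y ≠ 0) →
      μ = (r : ℤ) - 2 * i) ∧
    ((∀ x ∈ W, ∀ y : Fin r → ℂ, B x y = 0) → μ = -(2 * (i : ℤ))) := by
  intro γ W μ
  have hμ {m : ℤ} (h : IsLeast (pairWeights (fun j k => B (w j) (w k) ≠ 0)
      fun l : Fin r => if (l : ℕ) < i then (i : ℤ) - r else i) m) : μ = -m :=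
    congrArg Neg.neg h.csInf_eq
  have hab : (i : ℤ) - r ≤ i := by omega
  have hwW (j : Fin r) (hj : (j : ℕ) < i) : w j ∈ W := Submodule.subset_span ⟨j, hj, rfl⟩
  have htop (y : Fin r → ℂ) : y ∈ Submodule.span ℂ (Set.range w) := by simp
  refine ⟨fun ⟨x, hx, y, hy, hxy⟩ => ?_, fun hvan ⟨x, hx, y, hxy⟩ => ?_, fun hvan => ?_⟩
  · obtain ⟨_, ⟨j, (hj : (j : ℕ) < i), rfl⟩, _, ⟨k, (hk : (k : ℕ) < i), rfl⟩, hjk⟩ :=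
      B.exists_apply_ne_zero_of_mem_span hx hy hxy
    rw [hμ (isLeast_pairWeights_of_both hab hjk hj hk)]
    omega
  · obtain ⟨_, ⟨j, (hj : (j : ℕ) < i), rfl⟩, _, ⟨k, rfl⟩, hjk⟩ :=
      B.exists_apply_ne_zero_of_mem_span hx (htop y) hxy
    have hboth (j k : Fin r) (hj : (j : ℕ) < i) (hk : (k : ℕ) < i) : ¬ B (w j) (w k) ≠ 0 :=
      not_not.2 (hvan _ (hwW j hj) _ (hwW k hk))
    rw [hμ (isLeast_pairWeights_of_one hab hboth hjk hj)]
    omega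
  · obtain ⟨j, k, hjk⟩ : ∃ j k, B (w j) (w k) ≠ 0 := by
      by_contra! h
      exact hB (LinearMap.ext_basis w w h)
    have hnone (j k : Fin r) (h : B (w j) (w k) ≠ 0) : ¬ (j : ℕ) < i ∧ ¬ (k : ℕ) < i :=
      ⟨fun hj => h (hvan _ (hwW j hj) _), fun hk => h (hBsymm _ _ ▸ hvan _ (hwW k hk) _)⟩
    rw [hμ (isLeast_pairWeights_of_none hnone hjk)]
    omega

/-- Hilbert–Mumford weight for conic bundles: for a nonzero symmetric bilinear
form `b` on `ℂ^r`, a basis `(w_1,…,w_r)`, and `1 ≤ i ≤ r−1`, the weight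
`μ_i = −min{ γ^{(i)}_j + γ^{(i)}_k : b(w_j,w_k) ≠ 0 }` (0-based indexing) equals
`2r − 2i` if `b` does not vanish on `W_i × W_i`, equals `r − 2i` if `b` vanishes
on `W_i × W_i` but not on `W_i × ℂ^r`, and equals `−2i` if `b` vanishes on
`W_i × ℂ^r`, where `W_i = span(w_1,…,w_i)`; i.e. `μ_i = c·r − 2i` with
`c ∈ {0,1,2}` given by these three cases. -/
theorem conic_bundle_weight (r : ℕ) (hr : 2 ≤ r)
    (B : (Fin r → ℂ) →ₗ[ℂ] (Fin r → ℂ) →ₗ[ℂ] ℂ)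
    (hBsymm : ∀ x y : Fin r → ℂ, B x y = B y x) (hB : B ≠ 0)
    (w : Module.Basis (Fin r) ℂ (Fin r → ℂ))
    (i : ℕ) (hi1 : 1 ≤ i) (hi2 : i ≤ r - 1) :
    let γ : Fin r → ℤ := fun k => if (k : ℕ) < i then (i : ℤ) - r else (i : ℤ)
    let W : Submodule ℂ (Fin r → ℂ) := Submodule.span ℂ (⇑w '' {j : Fin r | (j : ℕ) < i})
    let μ : ℤ := -sInf {m : ℤ | ∃ j k : Fin r, B (w j) (w k) ≠ 0 ∧ γ j + γ k = m}
    ((∃ x ∈ W, ∃ y ∈ W, B x y ≠ 0) → μ = 2 * (r : ℤ) - 2 * i) ∧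
    ((∀ x ∈ W, ∀ y ∈ W, B x y = 0) → (∃ x ∈ W, ∃ y : Fin r → ℂ, B x y ≠ 0) →
      μ = (r : ℤ) - 2 * i) ∧
    ((∀ x ∈ W, ∀ y : Fin r → ℂ, B x y = 0) → μ = -(2 * (i : ℤ))) :=
  conic_bundle_weight_general r B hBsymm hB w i
end

section
/- Let γ = (γ_1,γ_2,γ_3,γ_4) ∈ ℚ⁴ satisfy γ_1 ≤ γ_2 ≤ γ_3 ≤ γ_4 and γ_1+γ_2+γ_3+γ_4 = 0. If additionally γ_1+γ_3 ≤ 2γ_2, then γ is a nonnegative rational combination of (−3,1,1,1), (−1,−1,−1,3), and (−5,−1,3,3); if instead 2γ_2 ≤ γ_1+γ_3, then γ is a nonnegative rational combination of (−2,−2,2,2), (−1,−1,−1,3), and (−5,−1,3,3). Conversely, every nonnegative rational combination of the first three vectors satisfies γ_1+γ_3 ≤ 2γ_2 (and lies in the cone), and every nonnegative rational combination of the second three satisfies 2γ_2 ≤ γ_1+γ_3. -/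
/-- Subcone decomposition for conic bundles of rank 4, minimal states (1,3)/(2,2):
a weight vector `γ ∈ ℚ⁴` with `γ_1 ≤ γ_2 ≤ γ_3 ≤ γ_4` and `∑γ_i = 0` is a
nonnegative rational combination of `γ^{(1)} = (−3,1,1,1)`, `γ^{(3)} = (−1,−1,−1,3)`,
and `γ^{(1)}+γ^{(2)} = (−5,−1,3,3)` whenever `γ_1+γ_3 ≤ 2γ_2`, and of
`γ^{(2)} = (−2,−2,2,2)`, `(−1,−1,−1,3)`, `(−5,−1,3,3)` whenever `2γ_2 ≤ γ_1+γ_3`;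
conversely every nonnegative combination of each list lies in the corresponding
region (and in the cone). -/
theorem conic_rank4_cone_decomposition_states_13_22 (g : Fin 4 → ℚ)
    (h01 : g 0 ≤ g 1) (h12 : g 1 ≤ g 2) (h23 : g 2 ≤ g 3)
    (hsum : g 0 + g 1 + g 2 + g 3 = 0) :
    (g 0 + g 2 ≤ 2 * g 1 →
      ∃ a b c : ℚ, 0 ≤ a ∧ 0 ≤ b ∧ 0 ≤ c ∧
        g = a • ![(-3 : ℚ), 1, 1, 1] + b • ![(-1 : ℚ), -1, -1, 3] +
            c • ![(-5 : ℚ), -1, 3, 3]) ∧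
    (2 * g 1 ≤ g 0 + g 2 →
      ∃ a b c : ℚ, 0 ≤ a ∧ 0 ≤ b ∧ 0 ≤ c ∧
        g = a • ![(-2 : ℚ), -2, 2, 2] + b • ![(-1 : ℚ), -1, -1, 3] +
            c • ![(-5 : ℚ), -1, 3, 3]) ∧
    (∀ a b c : ℚ, 0 ≤ a → 0 ≤ b → 0 ≤ c → ∀ g' : Fin 4 → ℚ,
      g' = a • ![(-3 : ℚ), 1, 1, 1] + b • ![(-1 : ℚ), -1, -1, 3] +
          c • ![(-5 : ℚ), -1, 3, 3] →
      g' 0 ≤ g' 1 ∧ g' 1 ≤ g' 2 ∧ g' 2 ≤ g' 3 ∧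
        g' 0 + g' 1 + g' 2 + g' 3 = 0 ∧ g' 0 + g' 2 ≤ 2 * g' 1) ∧
    (∀ a b c : ℚ, 0 ≤ a → 0 ≤ b → 0 ≤ c → ∀ g' : Fin 4 → ℚ,
      g' = a • ![(-2 : ℚ), -2, 2, 2] + b • ![(-1 : ℚ), -1, -1, 3] +
          c • ![(-5 : ℚ), -1, 3, 3] →
      g' 0 ≤ g' 1 ∧ g' 1 ≤ g' 2 ∧ g' 2 ≤ g' 3 ∧
        g' 0 + g' 1 + g' 2 + g' 3 = 0 ∧ 2 * g' 1 ≤ g' 0 + g' 2) := by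
  refine ⟨fun h => ?_, fun h => ?_, ?_, ?_⟩
  · refine ⟨(3 * g 1 + g 3) / 4, (g 3 - g 2) / 4, (g 2 - g 1) / 4, by linarith, by linarith,
      by linarith, ?_⟩
    funext i
    fin_cases i <;>
      simp [Matrix.smul_cons, Matrix.smul_empty] <;> linarith
  · refine ⟨(g 0 + g 2 - 2 * g 1) / 4, (g 3 - g 2) / 4, (g 1 - g 0) / 4, by linarith, by linarith,
      by linarith, ?_⟩
    funext i
    fin_cases i <;>
      simp [Matrix.smul_cons, Matrix.smul_empty] <;> linarith
  · intro a b c ha hb hc g' hg'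
    subst hg'
    simp [Matrix.smul_cons, Matrix.smul_empty]
    refine ⟨by linarith, by linarith, by linarith, by ring, by linarith⟩
  · intro a b c ha hb hc g' hg'
    subst hg'
    simp [Matrix.smul_cons, Matrix.smul_empty]
    refine ⟨by linarith, by linarith, by linarith, by ring, by linarith⟩
end

section
/- Let γ = (γ_1,γ_2,γ_3,γ_4) ∈ ℚ⁴ satisfy γ_1 ≤ γ_2 ≤ γ_3 ≤ γ_4 and γ_1+γ_2+γ_3+γ_4 = 0. If additionally γ_1+γ_4 ≤ 2γ_2, then γ is a nonnegative rational combination of (−3,1,1,1), (−5,−1,3,3), and (−4,0,0,4); if instead 2γ_2 ≤ γ_1+γ_4, then γ is a nonnegative rational combination of (−2,−2,2,2), (−1,−1,−1,3), (−5,−1,3,3), and (−4,0,0,4). Conversely, every nonnegative rational combination of the first list satisfies γ_1+γ_4 ≤ 2γ_2 (and lies in the cone), and every nonnegative rational combination of the second list satisfies 2γ_2 ≤ γ_1+γ_4. -/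
/-- Subcone decomposition for conic bundles of rank 4, minimal states (1,4)/(2,2):
a weight vector `γ ∈ ℚ⁴` with `γ_1 ≤ γ_2 ≤ γ_3 ≤ γ_4` and `∑γ_i = 0` is a
nonnegative rational combination of `(−3,1,1,1)`, `(−5,−1,3,3)`, `(−4,0,0,4)`
whenever `γ_1+γ_4 ≤ 2γ_2`, and of `(−2,−2,2,2)`, `(−1,−1,−1,3)`, `(−5,−1,3,3)`,
`(−4,0,0,4)` whenever `2γ_2 ≤ γ_1+γ_4`; conversely every nonnegative combination
of each list lies in the corresponding region (and in the cone). -/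
theorem conic_rank4_cone_decomposition_states_14_22 (g : Fin 4 → ℚ)
    (h01 : g 0 ≤ g 1) (h12 : g 1 ≤ g 2) (h23 : g 2 ≤ g 3)
    (hsum : g 0 + g 1 + g 2 + g 3 = 0) :
    (g 0 + g 3 ≤ 2 * g 1 →
      ∃ a b c : ℚ, 0 ≤ a ∧ 0 ≤ b ∧ 0 ≤ c ∧
        g = a • ![(-3 : ℚ), 1, 1, 1] + b • ![(-5 : ℚ), -1, 3, 3] +
            c • ![(-4 : ℚ), 0, 0, 4]) ∧
    (2 * g 1 ≤ g 0 + g 3 →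
      ∃ a b c d : ℚ, 0 ≤ a ∧ 0 ≤ b ∧ 0 ≤ c ∧ 0 ≤ d ∧
        g = a • ![(-2 : ℚ), -2, 2, 2] + b • ![(-1 : ℚ), -1, -1, 3] +
            c • ![(-5 : ℚ), -1, 3, 3] + d • ![(-4 : ℚ), 0, 0, 4]) ∧
    (∀ a b c : ℚ, 0 ≤ a → 0 ≤ b → 0 ≤ c → ∀ g' : Fin 4 → ℚ,
      g' = a • ![(-3 : ℚ), 1, 1, 1] + b • ![(-5 : ℚ), -1, 3, 3] +
          c • ![(-4 : ℚ), 0, 0, 4] →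
      g' 0 ≤ g' 1 ∧ g' 1 ≤ g' 2 ∧ g' 2 ≤ g' 3 ∧
        g' 0 + g' 1 + g' 2 + g' 3 = 0 ∧ g' 0 + g' 3 ≤ 2 * g' 1) ∧
    (∀ a b c d : ℚ, 0 ≤ a → 0 ≤ b → 0 ≤ c → 0 ≤ d → ∀ g' : Fin 4 → ℚ,
      g' = a • ![(-2 : ℚ), -2, 2, 2] + b • ![(-1 : ℚ), -1, -1, 3] +
          c • ![(-5 : ℚ), -1, 3, 3] + d • ![(-4 : ℚ), 0, 0, 4] →
      g' 0 ≤ g' 1 ∧ g' 1 ≤ g' 2 ∧ g' 2 ≤ g' 3 ∧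
        g' 0 + g' 1 + g' 2 + g' 3 = 0 ∧ 2 * g' 1 ≤ g' 0 + g' 3) := by
  refine ⟨?_, ?_, ?_, ?_⟩
  · intro h
    refine ⟨(3 * g 1 + g 2) / 4, (g 2 - g 1) / 4, (g 3 - g 2) / 4,
      by linarith, by linarith, by linarith, ?_⟩
    funext i
    fin_cases i <;>
      simp [Matrix.cons_val_zero, Matrix.cons_val_one, Matrix.head_cons] <;> linarith
  · intro h
    rcases le_or_gt 0 (g 3 + 3 * g 1) with hd | hd
    · refine ⟨0, -(3 * g 1 + g 2) / 4, (g 2 - g 1) / 4, (g 3 + 3 * g 1) / 4,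
        le_rfl, by linarith, by linarith, by linarith, ?_⟩
      funext i
      fin_cases i <;>
        simp [Matrix.cons_val_zero, Matrix.cons_val_one, Matrix.head_cons] <;> linarith
    · refine ⟨-(g 3 + 3 * g 1) / 4, (g 3 - g 2) / 4, (g 1 - g 0) / 4, 0,
        by linarith, by linarith, by linarith, le_rfl, ?_⟩
      funext i
      fin_cases i <;>
        simp [Matrix.cons_val_zero, Matrix.cons_val_one, Matrix.head_cons] <;> linarith
  · intro a b c ha hb hc g' hg'
    subst hg'
    simp [Matrix.cons_val_zero, Matrix.cons_val_one, Matrix.head_cons]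
    refine ⟨by linarith, by linarith, by linarith, by ring, by linarith⟩
  · intro a b c d ha hb hc hd g' hg'
    subst hg'
    simp [Matrix.cons_val_zero, Matrix.cons_val_one, Matrix.head_cons]
    refine ⟨by linarith, by linarith, by linarith, by ring, by linarith⟩
end

section
/- Let γ = (γ_1,γ_2,γ_3,γ_4) ∈ ℚ⁴ satisfy γ_1 ≤ γ_2 ≤ γ_3 ≤ γ_4 and γ_1+γ_2+γ_3+γ_4 = 0. If additionally γ_1+γ_4 ≤ γ_2+γ_3, then γ is a nonnegative rational combination of (−3,1,1,1), (−2,−2,2,2), and (−4,0,0,4); if instead γ_2+γ_3 ≤ γ_1+γ_4, then γ is a nonnegative rational combination of (−2,−2,2,2), (−1,−1,−1,3), and (−4,0,0,4). Conversely, every nonnegative rational combination of the first list satisfies γ_1+γ_4 ≤ γ_2+γ_3 (and lies in the cone), and every nonnegative rational combination of the second list satisfies γ_2+γ_3 ≤ γ_1+γ_4. -/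
/-- Subcone decomposition for conic bundles of rank 4, minimal states (1,4)/(2,3):
a weight vector `γ ∈ ℚ⁴` with `γ_1 ≤ γ_2 ≤ γ_3 ≤ γ_4` and `∑γ_i = 0` is a
nonnegative rational combination of `(−3,1,1,1)`, `(−2,−2,2,2)`, `(−4,0,0,4)`
whenever `γ_1+γ_4 ≤ γ_2+γ_3`, and of `(−2,−2,2,2)`, `(−1,−1,−1,3)`, `(−4,0,0,4)`
whenever `γ_2+γ_3 ≤ γ_1+γ_4`; conversely every nonnegative combination of each
list lies in the corresponding region (and in the cone). -/
theorem conic_rank4_cone_decomposition_states_14_23 (g : Fin 4 → ℚ)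
    (h01 : g 0 ≤ g 1) (h12 : g 1 ≤ g 2) (h23 : g 2 ≤ g 3)
    (hsum : g 0 + g 1 + g 2 + g 3 = 0) :
    (g 0 + g 3 ≤ g 1 + g 2 →
      ∃ a b c : ℚ, 0 ≤ a ∧ 0 ≤ b ∧ 0 ≤ c ∧
        g = a • ![(-3 : ℚ), 1, 1, 1] + b • ![(-2 : ℚ), -2, 2, 2] +
            c • ![(-4 : ℚ), 0, 0, 4]) ∧
    (g 1 + g 2 ≤ g 0 + g 3 →
      ∃ a b c : ℚ, 0 ≤ a ∧ 0 ≤ b ∧ 0 ≤ c ∧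
        g = a • ![(-2 : ℚ), -2, 2, 2] + b • ![(-1 : ℚ), -1, -1, 3] +
            c • ![(-4 : ℚ), 0, 0, 4]) ∧
    (∀ a b c : ℚ, 0 ≤ a → 0 ≤ b → 0 ≤ c → ∀ g' : Fin 4 → ℚ,
      g' = a • ![(-3 : ℚ), 1, 1, 1] + b • ![(-2 : ℚ), -2, 2, 2] +
          c • ![(-4 : ℚ), 0, 0, 4] →
      g' 0 ≤ g' 1 ∧ g' 1 ≤ g' 2 ∧ g' 2 ≤ g' 3 ∧
        g' 0 + g' 1 + g' 2 + g' 3 = 0 ∧ g' 0 + g' 3 ≤ g' 1 + g' 2) ∧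
    (∀ a b c : ℚ, 0 ≤ a → 0 ≤ b → 0 ≤ c → ∀ g' : Fin 4 → ℚ,
      g' = a • ![(-2 : ℚ), -2, 2, 2] + b • ![(-1 : ℚ), -1, -1, 3] +
          c • ![(-4 : ℚ), 0, 0, 4] →
      g' 0 ≤ g' 1 ∧ g' 1 ≤ g' 2 ∧ g' 2 ≤ g' 3 ∧
        g' 0 + g' 1 + g' 2 + g' 3 = 0 ∧ g' 1 + g' 2 ≤ g' 0 + g' 3) := by
  refine ⟨?_, ?_, ?_, ?_⟩
  · intro h
    refine ⟨(g 1 + g 2)/2, (g 2 - g 1)/4, (g 3 - g 2)/4, by linarith, by linarith, by linarith, ?_⟩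
    funext i
    fin_cases i <;>
      simp [Matrix.cons_val_zero, Matrix.cons_val_one, Matrix.head_cons] <;> linarith
  · intro h
    refine ⟨(g 2 - g 1)/4, -(g 1 + g 2)/2, (g 1 - g 0)/4, by linarith, by linarith, by linarith, ?_⟩
    funext i
    fin_cases i <;>
      simp [Matrix.cons_val_zero, Matrix.cons_val_one, Matrix.head_cons] <;> linarith
  · intro a b c ha hb hc g' hg'
    subst hg'
    simp [Matrix.cons_val_zero, Matrix.cons_val_one, Matrix.head_cons]
    refine ⟨by linarith, by linarith, by linarith, by ring, by linarith⟩
  · intro a b c ha hb hc g' hg'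
    subst hg'
    simp [Matrix.cons_val_zero, Matrix.cons_val_one, Matrix.head_cons]
    refine ⟨by linarith, by linarith, by linarith, by ring, by linarith⟩
end

section
/- Let γ = (γ_1,γ_2,γ_3,γ_4) ∈ ℚ⁴ satisfy γ_1 ≤ γ_2 ≤ γ_3 ≤ γ_4 and γ_1+γ_2+γ_3+γ_4 = 0. If additionally γ_1+γ_4 ≤ 2γ_3, then γ is a nonnegative rational combination of (−3,1,1,1), (−2,−2,2,2), (−4,0,0,4), and (−3,−3,1,5); if instead 2γ_3 ≤ γ_1+γ_4, then γ is a nonnegative rational combination of (−1,−1,−1,3), (−4,0,0,4), and (−3,−3,1,5). Conversely, every nonnegative rational combination of the first list satisfies γ_1+γ_4 ≤ 2γ_3 (and lies in the cone), and every nonnegative rational combination of the second list satisfies 2γ_3 ≤ γ_1+γ_4. -/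
/-- Subcone decomposition for conic bundles of rank 4, minimal states (1,4)/(3,3):
a weight vector `γ ∈ ℚ⁴` with `γ_1 ≤ γ_2 ≤ γ_3 ≤ γ_4` and `∑γ_i = 0` is a
nonnegative rational combination of `(−3,1,1,1)`, `(−2,−2,2,2)`, `(−4,0,0,4)`,
`(−3,−3,1,5)` whenever `γ_1+γ_4 ≤ 2γ_3`, and of `(−1,−1,−1,3)`, `(−4,0,0,4)`,
`(−3,−3,1,5)` whenever `2γ_3 ≤ γ_1+γ_4`; conversely every nonnegative combination
of each list lies in the corresponding region (and in the cone). -/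
theorem conic_rank4_cone_decomposition_states_14_33 (g : Fin 4 → ℚ)
    (h01 : g 0 ≤ g 1) (h12 : g 1 ≤ g 2) (h23 : g 2 ≤ g 3)
    (hsum : g 0 + g 1 + g 2 + g 3 = 0) :
    (g 0 + g 3 ≤ 2 * g 2 →
      ∃ a b c d : ℚ, 0 ≤ a ∧ 0 ≤ b ∧ 0 ≤ c ∧ 0 ≤ d ∧
        g = a • ![(-3 : ℚ), 1, 1, 1] + b • ![(-2 : ℚ), -2, 2, 2] +
            c • ![(-4 : ℚ), 0, 0, 4] + d • ![(-3 : ℚ), -3, 1, 5]) ∧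
    (2 * g 2 ≤ g 0 + g 3 →
      ∃ a b c : ℚ, 0 ≤ a ∧ 0 ≤ b ∧ 0 ≤ c ∧
        g = a • ![(-1 : ℚ), -1, -1, 3] + b • ![(-4 : ℚ), 0, 0, 4] +
            c • ![(-3 : ℚ), -3, 1, 5]) ∧
    (∀ a b c d : ℚ, 0 ≤ a → 0 ≤ b → 0 ≤ c → 0 ≤ d → ∀ g' : Fin 4 → ℚ,
      g' = a • ![(-3 : ℚ), 1, 1, 1] + b • ![(-2 : ℚ), -2, 2, 2] +
          c • ![(-4 : ℚ), 0, 0, 4] + d • ![(-3 : ℚ), -3, 1, 5] →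
      g' 0 ≤ g' 1 ∧ g' 1 ≤ g' 2 ∧ g' 2 ≤ g' 3 ∧
        g' 0 + g' 1 + g' 2 + g' 3 = 0 ∧ g' 0 + g' 3 ≤ 2 * g' 2) ∧
    (∀ a b c : ℚ, 0 ≤ a → 0 ≤ b → 0 ≤ c → ∀ g' : Fin 4 → ℚ,
      g' = a • ![(-1 : ℚ), -1, -1, 3] + b • ![(-4 : ℚ), 0, 0, 4] +
          c • ![(-3 : ℚ), -3, 1, 5] →
      g' 0 ≤ g' 1 ∧ g' 1 ≤ g' 2 ∧ g' 2 ≤ g' 3 ∧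
        g' 0 + g' 1 + g' 2 + g' 3 = 0 ∧ 2 * g' 2 ≤ g' 0 + g' 3) := by
  refine ⟨?_, ?_, ?_, ?_⟩
  · intro h
    by_cases hc : 0 ≤ g 1 - g 0 + g 2 - g 3
    · refine ⟨(g 1 - g 0 + g 2 - g 3)/4, (g 2 - g 1)/4, (g 3 - g 2)/4, 0,
        by linarith, by linarith, by linarith, le_refl _, ?_⟩
      funext i
      fin_cases i <;>
        simp [Matrix.cons_val_zero, Matrix.cons_val_one, Matrix.head_cons] <;> ring_nf <;> linarith
    · refine ⟨0, (2*g 2 - g 0 - g 3)/4, (g 1 - g 0)/4, (g 3 - g 2 + g 0 - g 1)/4,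
        le_refl _, by linarith, by linarith, by linarith, ?_⟩
      funext i
      fin_cases i <;>
        simp [Matrix.cons_val_zero, Matrix.cons_val_one, Matrix.head_cons] <;> ring_nf <;> linarith
  · intro h
    refine ⟨(-g 1 - 3*g 2)/4, (g 1 - g 0)/4, (g 2 - g 1)/4,
      by linarith, by linarith, by linarith, ?_⟩
    funext i
    fin_cases i <;>
      simp [Matrix.cons_val_zero, Matrix.cons_val_one, Matrix.head_cons] <;> ring_nf <;> linarith
  · intro a b c d ha hb hc hd g' hg'
    subst hg'
    simp only [Pi.add_apply, Pi.smul_apply, Matrix.cons_val_zero, Matrix.cons_val_one,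
      Matrix.head_cons, Matrix.cons_val_two, Matrix.tail_cons, Matrix.cons_val_three,
      smul_eq_mul]
    refine ⟨by nlinarith, by nlinarith, by nlinarith, by ring, by nlinarith⟩
  · intro a b c ha hb hc g' hg'
    subst hg'
    simp only [Pi.add_apply, Pi.smul_apply, Matrix.cons_val_zero, Matrix.cons_val_one,
      Matrix.head_cons, Matrix.cons_val_two, Matrix.tail_cons, Matrix.cons_val_three,
      smul_eq_mul]
    refine ⟨by nlinarith, by nlinarith, by nlinarith, by ring, by nlinarith⟩
end

section
/- Let γ = (γ_1,γ_2,γ_3,γ_4) ∈ ℚ⁴ satisfy γ_1 ≤ γ_2 ≤ γ_3 ≤ γ_4 and γ_1+γ_2+γ_3+γ_4 = 0. If additionally γ_2+γ_4 ≤ 2γ_3, then γ is a nonnegative rational combination of (−3,1,1,1), (−2,−2,2,2), and (−3,−3,1,5); if instead 2γ_3 ≤ γ_2+γ_4, then γ is a nonnegative rational combination of (−3,1,1,1), (−1,−1,−1,3), and (−3,−3,1,5). Conversely, every nonnegative rational combination of the first list satisfies γ_2+γ_4 ≤ 2γ_3 (and lies in the cone), and every nonnegative rational combination of the second list satisfies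 2γ_3 ≤ γ_2+γ_4. -/
/-- Subcone decomposition for conic bundles of rank 4, minimal states (2,4)/(3,3):
a weight vector `γ ∈ ℚ⁴` with `γ_1 ≤ γ_2 ≤ γ_3 ≤ γ_4` and `∑γ_i = 0` is a
nonnegative rational combination of `(−3,1,1,1)`, `(−2,−2,2,2)`, `(−3,−3,1,5)`
whenever `γ_2+γ_4 ≤ 2γ_3`, and of `(−3,1,1,1)`, `(−1,−1,−1,3)`, `(−3,−3,1,5)`
whenever `2γ_3 ≤ γ_2+γ_4`; conversely every nonnegative combination of each list
lies in the corresponding region (and in the cone). -/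
theorem conic_rank4_cone_decomposition_states_24_33 (g : Fin 4 → ℚ)
    (h01 : g 0 ≤ g 1) (h12 : g 1 ≤ g 2) (h23 : g 2 ≤ g 3)
    (hsum : g 0 + g 1 + g 2 + g 3 = 0) :
    (g 1 + g 3 ≤ 2 * g 2 →
      ∃ a b c : ℚ, 0 ≤ a ∧ 0 ≤ b ∧ 0 ≤ c ∧
        g = a • ![(-3 : ℚ), 1, 1, 1] + b • ![(-2 : ℚ), -2, 2, 2] +
            c • ![(-3 : ℚ), -3, 1, 5]) ∧
    (2 * g 2 ≤ g 1 + g 3 →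
      ∃ a b c : ℚ, 0 ≤ a ∧ 0 ≤ b ∧ 0 ≤ c ∧
        g = a • ![(-3 : ℚ), 1, 1, 1] + b • ![(-1 : ℚ), -1, -1, 3] +
            c • ![(-3 : ℚ), -3, 1, 5]) ∧
    (∀ a b c : ℚ, 0 ≤ a → 0 ≤ b → 0 ≤ c → ∀ g' : Fin 4 → ℚ,
      g' = a • ![(-3 : ℚ), 1, 1, 1] + b • ![(-2 : ℚ), -2, 2, 2] +
          c • ![(-3 : ℚ), -3, 1, 5] →
      g' 0 ≤ g' 1 ∧ g' 1 ≤ g' 2 ∧ g' 2 ≤ g' 3 ∧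
        g' 0 + g' 1 + g' 2 + g' 3 = 0 ∧ g' 1 + g' 3 ≤ 2 * g' 2) ∧
    (∀ a b c : ℚ, 0 ≤ a → 0 ≤ b → 0 ≤ c → ∀ g' : Fin 4 → ℚ,
      g' = a • ![(-3 : ℚ), 1, 1, 1] + b • ![(-1 : ℚ), -1, -1, 3] +
          c • ![(-3 : ℚ), -3, 1, 5] →
      g' 0 ≤ g' 1 ∧ g' 1 ≤ g' 2 ∧ g' 2 ≤ g' 3 ∧
        g' 0 + g' 1 + g' 2 + g' 3 = 0 ∧ 2 * g' 2 ≤ g' 1 + g' 3) := by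
  refine ⟨?_, ?_, ?_, ?_⟩
  · intro h
    refine ⟨(2*g 1 + g 2 + g 3)/4, (2*g 2 - g 1 - g 3)/4, (g 3 - g 2)/4,
      by linarith, by linarith, by linarith, ?_⟩
    funext i
    fin_cases i <;>
      simp [Matrix.smul_cons, Matrix.cons_add] <;> ring_nf <;> linarith
  · intro h
    refine ⟨(2*g 1 + g 2 + g 3)/4, (g 1 + g 3 - 2*g 2)/4, (g 2 - g 1)/4,
      by linarith, by linarith, by linarith, ?_⟩
    funext i
    fin_cases i <;>
      simp [Matrix.smul_cons, Matrix.cons_add] <;> ring_nf <;> linarith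
  · intro a b c ha hb hc g' hg'
    subst hg'
    simp [Matrix.smul_cons, Matrix.cons_add]
    refine ⟨by linarith, by linarith, by linarith, by ring, by linarith⟩
  · intro a b c ha hb hc g' hg'
    subst hg'
    simp [Matrix.smul_cons, Matrix.cons_add]
    refine ⟨by linarith, by linarith, by linarith, by ring, by linarith⟩
end
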